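/- Let z = (z₁, z₂, z₃) have i.i.d. standard normal coordinates and let f(z) = z₁ + z₁z₂ + z₁z₂z₃. Then E[f(z) · z₁] = 1, E[(f(z))² · z₂] = 2, and E[(f(z))² · z₃] = 2. In particular, for each i ∈ {1,2,3} there is a polynomial F : ℝ → ℝ with E[F(f(z)) · z_i] ≠ 0. -/

import Mathlib

/-!
Each integrand is a polynomial in the coordinates. Under a product measure the integral of a
monomial factors into one-dimensional moments, and the odd moments of `N(0,1)` vanish while
`E[x⁰] = E[x²] = 1`, so only the monomials even in every coordinate contribute.
-/

open MeasureTheory ProbabilityTheory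

/-- The standard Gaussian measure on `ℝ³` (i.i.d. `N(0,1)` coordinates). -/
noncomputable def stdGaussian3 : Measure (Fin 3 → ℝ) :=
  Measure.pi fun _ => gaussianReal 0 1

/-- The staircase target `f(z) = z₁ + z₁z₂ + z₁z₂z₃`. -/
def staircase (z : Fin 3 → ℝ) : ℝ := z 0 + z 0 * z 1 + z 0 * z 1 * z 2

open scoped NNReal

section GaussianMoments

variable {μ : ℝ} {v : ℝ≥0}

lemma integrable_pow_gaussianReal (n : ℕ) : Integrable (fun x ↦ x ^ n) (gaussianReal μ v) :=
  integrable_pow_of_mem_interior_integrableExpSet (X := fun x ↦ x) (by simp) n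

lemma integral_sq_gaussianReal : ∫ x, x ^ 2 ∂gaussianReal μ v = μ ^ 2 + v := by
  have h := variance_eq_sub (memLp_id_gaussianReal' (μ := μ) (v := v) 2 (by simp))
  simp only [variance_id_gaussianReal, id_eq, Pi.pow_apply, integral_id_gaussianReal] at h
  linarith

lemma integral_pow_gaussianReal_of_odd {n : ℕ} (hn : Odd n) :
    ∫ x, x ^ n ∂gaussianReal 0 v = 0 := by
  have h := integral_map (μ := gaussianReal 0 v) (φ := fun x ↦ -x) (f := fun x ↦ x ^ n)
    (by fun_prop) (by fun_prop)
  rw [gaussianReal_map_neg, neg_zero] at h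
  simp only [hn.neg_pow, integral_neg] at h
  linarith

end GaussianMoments

lemma integral_sum_monomials_pi {ι J : Type*} [Fintype ι] {μ : ι → Measure ℝ}
    [∀ i, SigmaFinite (μ i)] (hμ : ∀ i n, Integrable (fun x ↦ x ^ n) (μ i))
    (s : Finset J) (c : J → ℝ) (k : J → ι → ℕ) :
    ∫ z, ∑ j ∈ s, c j * ∏ i, z i ^ k j i ∂Measure.pi μ
      = ∑ j ∈ s, c j * ∏ i, ∫ x, x ^ k j i ∂μ i := by
  rw [integral_finsetSum]
  · refine Finset.sum_congr rfl fun j _ ↦ ?_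
    rw [integral_const_mul, integral_fintype_prod_eq_prod (fun i x ↦ x ^ k j i)]
  · exact fun j _ ↦ (Integrable.fintype_prod (f := fun i x ↦ x ^ k j i) fun i ↦ hμ i _).const_mul _

lemma integral_stdGaussian3_of_eq_sum_monomials {g : (Fin 3 → ℝ) → ℝ} {n : ℕ}
    (c : Fin n → ℝ) (k : Fin n → Fin 3 → ℕ) (hg : ∀ z, g z = ∑ j, c j * ∏ i, z i ^ k j i) :
    ∫ z, g z ∂stdGaussian3 = ∑ j, c j * ∏ i, ∫ x, x ^ k j i ∂gaussianReal 0 1 := by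
  simp_rw [hg]
  exact integral_sum_monomials_pi (fun _ ↦ integrable_pow_gaussianReal) _ _ _

lemma integral_staircase_mul_coord_zero : ∫ z, staircase z * z 0 ∂stdGaussian3 = 1 := by
  rw [integral_stdGaussian3_of_eq_sum_monomials ![1, 1, 1]
    ![![2, 0, 0], ![2, 1, 0], ![2, 1, 1]]
    (fun z ↦ by simp [staircase, Fin.sum_univ_succ, Fin.prod_univ_succ]; ring)]
  simp [Fin.sum_univ_succ, Fin.prod_univ_succ, integral_sq_gaussianReal]

lemma integral_staircase_sq_mul_coord_one : ∫ z, staircase z ^ 2 * z 1 ∂stdGaussian3 = 2 := by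
  rw [integral_stdGaussian3_of_eq_sum_monomials ![1, 2, 2, 1, 2, 1]
    ![![2, 1, 0], ![2, 2, 0], ![2, 2, 1], ![2, 3, 0], ![2, 3, 1], ![2, 3, 2]]
    (fun z ↦ by simp [staircase, Fin.sum_univ_succ, Fin.prod_univ_succ]; ring)]
  simp [Fin.sum_univ_succ, Fin.prod_univ_succ, integral_sq_gaussianReal,
    integral_pow_gaussianReal_of_odd, Nat.odd_iff]

lemma integral_staircase_sq_mul_coord_two : ∫ z, staircase z ^ 2 * z 2 ∂stdGaussian3 = 2 := by
  rw [integral_stdGaussian3_of_eq_sum_monomials ![1, 2, 2, 1, 2, 1]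
    ![![2, 0, 1], ![2, 1, 1], ![2, 1, 2], ![2, 2, 1], ![2, 2, 2], ![2, 2, 3]]
    (fun z ↦ by simp [staircase, Fin.sum_univ_succ, Fin.prod_univ_succ]; ring)]
  simp [Fin.sum_univ_succ, Fin.prod_univ_succ, integral_sq_gaussianReal,
    integral_pow_gaussianReal_of_odd, Nat.odd_iff]

/-- For the staircase target, every direction of the target subspace admits a polynomial
output transformation with nonzero linear correlation. -/
theorem staircase_all_directions_learnable :
    (∫ z, staircase z * z 0 ∂stdGaussian3 = 1) ∧
    (∫ z, (staircase z) ^ 2 * z 1 ∂stdGaussian3 = 2) ∧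
    (∫ z, (staircase z) ^ 2 * z 2 ∂stdGaussian3 = 2) ∧
    (∀ i : Fin 3, ∃ F : Polynomial ℝ,
      ∫ z, F.eval (staircase z) * z i ∂stdGaussian3 ≠ 0) := by
  have h₀ := integral_staircase_mul_coord_zero
  have h₁ := integral_staircase_sq_mul_coord_one
  have h₂ := integral_staircase_sq_mul_coord_two
  refine ⟨h₀, h₁, h₂, fun i ↦ ?_⟩
  fin_cases i
  · exact ⟨Polynomial.X, by simp [h₀]⟩
  · exact ⟨Polynomial.X ^ 2, by simp [h₁]⟩
  · exact ⟨Polynomial.X ^ 2, by simp [h₂]⟩
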